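/- arXiv:2405.00093 — 2 statements merged into one kernel-verified Lean document; each statement's English description precedes it below -/
import Mathlib

section
/- Let $\mathcal{T}$ be a triangulated category with finite-dimensional Hom-spaces, $\{P_i\}_{i\in I}$ and $\{S_j\}_{j\in I}$ families of objects indexed by bidegree shifts such that $\mathrm{Hom}(P_i[a+b\mathbb{X}],S_j)=0$ unless $i=j$ and $a=b=0$, in which case it is one-dimensional, and suppose every object $Z$ of $\mathcal{T}$ admits a 'minimal' presentation as a twisted complex built from objects $P_{i_\lambda}[a_\lambda+b_\lambda\mathbb{X}]$ with radical differentials. Then $\dim\mathrm{Hom}(Z,S_j[r+s\mathbb{X}])$ equals the number of indices $\lambda$ with $(i_\lambda,a_\lambda,b_\lambda)=(j,r,s)$; in particular the left orthogonal of $\mathrm{thick}(\mathcal{S}[\mathbb{Z}_{<0}\mathbb{X}])$ in $\mathrm{per}^{\mathbb{Z}}(\Pi_{\mathbb{X}}A)$ equals $\mathrm{thick}(\mathcal{P}[\mathbb{Z}_{\geq0}\mathbb{X}])$. -/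
open CategoryTheory CategoryTheory.Limits CategoryTheory.Pretriangulated

universe v u

variable {C : Type u} [Category.{v} C] [HasZeroObject C] [HasShift C ℤ]
  [Preadditive C] [∀ n : ℤ, (shiftFunctor C n).Additive] [Pretriangulated C]

/-- `thickGen S X` : `X` belongs to the thick (triangulated, closed under direct
summands) subcategory generated by the set of objects `S`. -/
inductive thickGen (S : Set C) : C → Prop
  | of {X : C} : X ∈ S → thickGen S X
  | zero {X : C} : IsZero X → thickGen S X
  | isoClosed {X Y : C} : (X ≅ Y) → thickGen S X → thickGen S Y
  | shift {X : C} (n : ℤ) : thickGen S X → thickGen S (X⟦n⟧)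
  | ext₂ (T : Triangle C) : T ∈ distinguishedTriangles →
      thickGen S T.obj₁ → thickGen S T.obj₃ → thickGen S T.obj₂
  | smd {X Y : C} (s : X ⟶ Y) (r : Y ⟶ X) : s ≫ r = 𝟙 X → thickGen S Y → thickGen S X

/-- A set of objects is thick if it is closed under the formation rules of
thick subcategories. -/
def ThickClosed (P : Set C) : Prop := ∀ X : C, thickGen P X → X ∈ P

open scoped Classical

/-- A minimal presentation of an object `Z` of `per^ℤ(Π_𝕏 A)`: a finite
filtration `0 = Z₀ → Z₁ → ⋯ → Z_N ≅ Z` by distinguished triangles whose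
subquotients are bidegree shifts `P_{i_λ}[a_λ + b_λ𝕏]` of the projectives, and
whose connecting maps have components in the radical, i.e. induce the zero map
into every bidegree shift of a simple. -/
structure MinPres {ι : Type} (σ : ℤ → C ⥤ C) (P S : ι → C) (Z : C) where
  N : ℕ
  Zf : Fin (N + 1) → C
  isZero_bot : IsZero (Zf 0)
  topIso : Zf (Fin.last N) ≅ Z
  lab : Fin N → ι
  aF : Fin N → ℤ
  bF : Fin N → ℤ
  f : ∀ m : Fin N, Zf m.castSucc ⟶ Zf m.succ
  g : ∀ m : Fin N, Zf m.succ ⟶ ((((σ (bF m)).obj (P (lab m)))⟦aF m⟧ : C))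
  δ : ∀ m : Fin N, ((((σ (bF m)).obj (P (lab m)))⟦aF m⟧ : C)) ⟶ ((Zf m.castSucc)⟦(1 : ℤ)⟧)
  tri : ∀ m : Fin N, Triangle.mk (f m) (g m) (δ m) ∈ distinguishedTriangles
  radical : ∀ (m : Fin N) (j : ι) (r s : ℤ)
      (u : Zf m.castSucc ⟶ ((((σ s).obj (S j))⟦r⟧ : C))),
      δ m ≫ (shiftFunctor C (1 : ℤ)).map u = 0

/-!
Applying `Hom(-, S_j[r + s𝕏])` to a triangle `Z_m → Z_{m+1} → P_{i_m}[a_m + b_m𝕏] →` of a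
minimal presentation gives a short exact sequence: the connecting morphism has radical
components, so it is killed by every map into a shifted simple (in the degrees `r` and `r - 1`
alike). Summing dimensions along the filtration gives the count.

For the orthogonal, `Hom(P_i[a + b𝕏], S_j[s𝕏]) = 0` whenever `b ≥ 0 > s`, and vanishing of
morphisms propagates through the thick closures on both sides, since each side is closed under
shifts. Conversely, if `Z` has no nonzero map to any `S_j[r + s𝕏]` with `s < 0`, the count
shows that its minimal presentation only involves `P_i[a + b𝕏]` with `b ≥ 0`, and the
filtration then builds `Z` inside `thick(𝒫[ℤ_{≥0}𝕏])`.
-/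

theorem Fin.eq_sum_of_succ_eq_add {M : Type*} [AddCommMonoid M] :
    ∀ {N : ℕ} (f : Fin (N + 1) → M) (d : Fin N → M),
      f 0 = 0 → (∀ m, f m.succ = f m.castSucc + d m) → f (Fin.last N) = ∑ m, d m
  | 0, f, _, h0, _ => by simpa using h0
  | N + 1, f, d, h0, hs => by
    rw [Fin.sum_univ_castSucc, ← Fin.succ_last, hs]
    congr 1
    exact Fin.eq_sum_of_succ_eq_add (f ∘ Fin.castSucc) (d ∘ Fin.castSucc) h0
      fun m => hs m.castSucc

lemma exists_shiftFunctor_map_comp {D : Type*} [Category D] [HasShift D ℤ] {X Y : D} (a : ℤ)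
    (w : X⟦(1 : ℤ)⟧ ⟶ Y⟦a⟧) :
    ∃ u : X ⟶ Y⟦a - 1⟧,
      w = u⟦(1 : ℤ)⟧' ≫ (shiftFunctorAdd' D (a - 1) 1 a (by omega)).inv.app Y :=
  ⟨(shiftFunctor D (1 : ℤ)).preimage
    (w ≫ (shiftFunctorAdd' D (a - 1) 1 a (by omega)).hom.app Y), by simp⟩

section Linear

variable (k : Type*) [Field k] [Linear k C]

lemma surjective_leftComp_mor₁ (T : Triangle C) (hT : T ∈ distTriang C) {W : C}
    (h : ∀ u : T.obj₁ ⟶ W, T.mor₃ ≫ u⟦(1 : ℤ)⟧' = 0) :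
    Function.Surjective (Linear.leftComp k W T.mor₁) := by
  intro u
  have hu : T.invRotate.mor₁ ≫ u = 0 := by
    have nat := (shiftFunctorCompIsoId C (1 : ℤ) (-1) (by omega)).hom.naturality u
    dsimp at nat
    change (-(T.mor₃⟦(-1 : ℤ)⟧' ≫
      (shiftFunctorCompIsoId C (1 : ℤ) (-1) (by omega)).hom.app _)) ≫ u = 0
    rw [Preadditive.neg_comp, Category.assoc, ← nat, ← Functor.map_comp_assoc, h,
      Functor.map_zero, zero_comp, neg_zero]
  obtain ⟨v, hv⟩ := Triangle.yoneda_exact₂ _ (inv_rot_of_distTriang T hT) u hu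
  exact ⟨v, hv.symm⟩

lemma injective_leftComp_mor₂ (T : Triangle C) (hT : T ∈ distTriang C) {W : C}
    (h : ∀ w : T.obj₁⟦(1 : ℤ)⟧ ⟶ W, T.mor₃ ≫ w = 0) :
    Function.Injective (Linear.leftComp k W T.mor₂) := by
  refine (injective_iff_map_eq_zero _).mpr fun v hv => ?_
  obtain ⟨w, rfl⟩ := Triangle.yoneda_exact₃ T hT v hv
  exact h w

lemma ker_leftComp_mor₁ (T : Triangle C) (hT : T ∈ distTriang C) (W : C) :
    LinearMap.ker (Linear.leftComp k W T.mor₁) =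
      LinearMap.range (Linear.leftComp k W T.mor₂) := by
  ext v
  simp only [LinearMap.mem_ker, LinearMap.mem_range, Linear.leftComp_apply]
  constructor
  · intro hv
    obtain ⟨w, rfl⟩ := Triangle.yoneda_exact₂ T hT v hv
    exact ⟨w, rfl⟩
  · rintro ⟨w, rfl⟩
    rw [comp_distTriang_mor_zero₁₂_assoc _ hT, zero_comp]

lemma finrank_hom_obj₂ [∀ X Y : C, FiniteDimensional k (X ⟶ Y)]
    (T : Triangle C) (hT : T ∈ distTriang C) {W : C}
    (h₁ : ∀ u : T.obj₁ ⟶ W, T.mor₃ ≫ u⟦(1 : ℤ)⟧' = 0)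
    (h₂ : ∀ w : T.obj₁⟦(1 : ℤ)⟧ ⟶ W, T.mor₃ ≫ w = 0) :
    Module.finrank k (T.obj₂ ⟶ W) =
      Module.finrank k (T.obj₁ ⟶ W) + Module.finrank k (T.obj₃ ⟶ W) := by
  have hrn := LinearMap.finrank_range_add_finrank_ker (Linear.leftComp k W T.mor₁)
  rwa [LinearMap.range_eq_top.mpr (surjective_leftComp_mor₁ k T hT h₁), finrank_top,
    ker_leftComp_mor₁ k T hT, LinearMap.finrank_range_of_inj (injective_leftComp_mor₂ k T hT h₂),
    eq_comm] at hrn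

end Linear

namespace thickGen

variable {X Y : Set C}

lemma shift_hom_eq_zero {x y : C} (hy : thickGen Y y)
    (hx : ∀ y' ∈ Y, ∀ (n : ℤ) (φ : x⟦n⟧ ⟶ y'), φ = 0) (n : ℤ) (φ : x⟦n⟧ ⟶ y) : φ = 0 := by
  induction hy generalizing n with
  | of hy' => exact hx _ hy' n φ
  | zero h => exact h.eq_of_tgt φ 0
  | isoClosed e _ ih => simpa using ih n (φ ≫ e.inv) =≫ e.hom
  | @shift y m _ ih =>
    have hφ : φ⟦-m⟧' = 0 := by
      simpa using (shiftFunctorAdd' C n (-m) (n + -m) rfl).inv.app x ≫=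
        ih (n + -m) ((shiftFunctorAdd' C n (-m) (n + -m) rfl).hom.app x ≫ φ⟦-m⟧' ≫
          (shiftFunctorCompIsoId C m (-m) (by omega)).hom.app y) =≫
        (shiftFunctorCompIsoId C m (-m) (by omega)).inv.app y
    exact (Functor.map_eq_zero_iff _).mp hφ
  | ext₂ T hT _ _ ih₁ ih₃ =>
    obtain ⟨ψ, rfl⟩ := Triangle.coyoneda_exact₂ T hT φ (ih₃ n _)
    rw [ih₁ n ψ, zero_comp]
  | smd s r hsr _ ih =>
    rw [← Category.comp_id φ, ← hsr, ← Category.assoc, ih n (φ ≫ s), zero_comp]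

lemma hom_eq_zero_of_shift_closed {x : C} (hx : thickGen X x) {𝒴 : Set C}
    (h𝒴 : ∀ y ∈ 𝒴, ∀ n : ℤ, y⟦n⟧ ∈ 𝒴) (hX : ∀ x' ∈ X, ∀ y ∈ 𝒴, ∀ φ : x' ⟶ y, φ = 0)
    {y : C} (hy : y ∈ 𝒴) (φ : x ⟶ y) : φ = 0 := by
  induction hx generalizing y with
  | of hx' => exact hX _ hx' y hy φ
  | zero h => exact h.eq_of_src φ 0
  | isoClosed e _ ih => simpa using e.inv ≫= ih hy (e.hom ≫ φ)
  | @shift x m _ ih =>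
    have hφ : φ⟦-m⟧' = 0 := by
      simpa using (shiftFunctorCompIsoId C m (-m) (by omega)).hom.app x ≫=
        ih (h𝒴 y hy (-m)) ((shiftFunctorCompIsoId C m (-m) (by omega)).inv.app x ≫ φ⟦-m⟧')
    exact (Functor.map_eq_zero_iff _).mp hφ
  | ext₂ T hT _ _ ih₁ ih₃ =>
    obtain ⟨ψ, rfl⟩ := Triangle.yoneda_exact₂ T hT φ (ih₁ hy _)
    rw [ih₃ hy ψ, comp_zero]
  | smd s r hsr _ ih =>
    rw [← Category.id_comp φ, ← hsr, Category.assoc, ih hy (r ≫ φ), comp_zero]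

lemma hom_eq_zero {x y : C} (hx : thickGen X x) (hy : thickGen Y y)
    (h : ∀ x' ∈ X, ∀ y' ∈ Y, ∀ (n : ℤ) (φ : x'⟦n⟧ ⟶ y'), φ = 0) (φ : x ⟶ y) : φ = 0 :=
  hx.hom_eq_zero_of_shift_closed (𝒴 := {y | thickGen Y y}) (fun _ hy n => hy.shift n)
    (fun x' hx' _ hy ψ => by
      simpa using (shiftFunctorZero C ℤ).inv.app x' ≫=
        hy.shift_hom_eq_zero (h x' hx') 0 ((shiftFunctorZero C ℤ).hom.app x' ≫ ψ))
    hy φ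

end thickGen

lemma finrank_hom_shift_eq_ite (k : Type*) [Field k]
    {D : Type*} [Category D] [Preadditive D] [HasShift D ℤ] [Linear k D]
    {ι : Type*} {σ : ℤ → D ⥤ D} {P S : ι → D}
    (horth1 : ∀ (i : ι) (a b : ℤ),
      Module.finrank k ((((σ b).obj (P i))⟦a⟧ : D) ⟶ (((σ b).obj (S i))⟦a⟧ : D)) = 1)
    (horth0 : ∀ (i j : ι) (a b r s : ℤ), ¬(i = j ∧ a = r ∧ b = s) →
      ∀ φ : (((σ b).obj (P i))⟦a⟧ : D) ⟶ (((σ s).obj (S j))⟦r⟧ : D), φ = 0)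
    (i j : ι) (a b r s : ℤ) :
    Module.finrank k ((((σ b).obj (P i))⟦a⟧ : D) ⟶ (((σ s).obj (S j))⟦r⟧ : D)) =
      if i = j ∧ a = r ∧ b = s then 1 else 0 := by
  split_ifs with h
  · obtain ⟨rfl, rfl, rfl⟩ := h
    exact horth1 i a b
  · have : Subsingleton ((((σ b).obj (P i))⟦a⟧ : D) ⟶ (((σ s).obj (S j))⟦r⟧ : D)) :=
      ⟨fun φ ψ => (horth0 i j a b r s h φ).trans (horth0 i j a b r s h ψ).symm⟩
    exact Module.finrank_zero_of_subsingleton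

namespace MinPres

variable {ι : Type} {σ : ℤ → C ⥤ C} {P S : ι → C} {Z : C} (mp : MinPres σ P S Z)

lemma thickGen_of_mem {X : Set C} (hX : ∀ m, (σ (mp.bF m)).obj (P (mp.lab m)) ∈ X) :
    thickGen X Z := by
  suffices ∀ m : Fin (mp.N + 1), thickGen X (mp.Zf m) from (this _).isoClosed mp.topIso
  intro m
  induction m using Fin.induction with
  | zero => exact .zero mp.isZero_bot
  | succ m ih => exact .ext₂ _ (mp.tri m) ih (.shift _ (.of (hX m)))

section HomCount

variable (k : Type*) [Field k] [Linear k C] [∀ X Y : C, FiniteDimensional k (X ⟶ Y)]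

lemma finrank_hom_Zf_succ (m : Fin mp.N) (j : ι) (r s : ℤ) :
    Module.finrank k (mp.Zf m.succ ⟶ (((σ s).obj (S j))⟦r⟧ : C)) =
      Module.finrank k (mp.Zf m.castSucc ⟶ (((σ s).obj (S j))⟦r⟧ : C)) +
      Module.finrank k
        ((((σ (mp.bF m)).obj (P (mp.lab m)))⟦mp.aF m⟧ : C) ⟶ (((σ s).obj (S j))⟦r⟧ : C)) :=
  finrank_hom_obj₂ k _ (mp.tri m) (mp.radical m j r s) fun w => by
    obtain ⟨u, rfl⟩ := exists_shiftFunctor_map_comp r w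
    rw [← Category.assoc]
    exact (mp.radical m j (r - 1) s u =≫ _).trans zero_comp

lemma finrank_hom_eq_card
    (hPS : ∀ (i j : ι) (a b r s : ℤ),
      Module.finrank k ((((σ b).obj (P i))⟦a⟧ : C) ⟶ (((σ s).obj (S j))⟦r⟧ : C)) =
        if i = j ∧ a = r ∧ b = s then 1 else 0)
    (j : ι) (r s : ℤ) :
    Module.finrank k (Z ⟶ (((σ s).obj (S j))⟦r⟧ : C)) =
      (Finset.univ.filter
        (fun m : Fin mp.N => mp.lab m = j ∧ mp.aF m = r ∧ mp.bF m = s)).card := by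
  have : Subsingleton (mp.Zf 0 ⟶ (((σ s).obj (S j))⟦r⟧ : C)) :=
    ⟨mp.isZero_bot.eq_of_src⟩
  rw [← (Linear.homCongr k mp.topIso (Iso.refl _)).finrank_eq, Finset.card_filter]
  exact Fin.eq_sum_of_succ_eq_add (fun m => Module.finrank k (mp.Zf m ⟶ _)) _
    Module.finrank_zero_of_subsingleton fun m => by
      rw [finrank_hom_Zf_succ, hPS]

lemma exists_hom_ne_zero
    (hPS : ∀ (i j : ι) (a b r s : ℤ),
      Module.finrank k ((((σ b).obj (P i))⟦a⟧ : C) ⟶ (((σ s).obj (S j))⟦r⟧ : C)) =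
        if i = j ∧ a = r ∧ b = s then 1 else 0)
    (m : Fin mp.N) :
    ∃ φ : Z ⟶ (((σ (mp.bF m)).obj (S (mp.lab m)))⟦mp.aF m⟧ : C), φ ≠ 0 := by
  rw [← Module.finrank_pos_iff_exists_ne_zero (R := k), mp.finrank_hom_eq_card k hPS]
  exact Finset.card_pos.mpr ⟨m, by simp⟩

end HomCount

end MinPres

/-- In `𝒯 = per^ℤ(Π_𝕏 A)` (for a connective smooth proper
dg algebra `A`), abstracted as a Hom-finite `k`-linear pretriangulated category
`C` with Adams shift functors `σ`, families of projectives `P i` and simples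
`S j` satisfying `Hom(P_i[a+b𝕏], S_j) = 0` unless `i = j`, `a = b = 0`, in which
case it is one-dimensional: if every object admits a minimal presentation as a
twisted complex built from the `P_{i_λ}[a_λ + b_λ𝕏]` with radical differentials,
then `dim Hom(Z, S_j[r+s𝕏])` equals the number of indices `λ` with
`(i_λ, a_λ, b_λ) = (j, r, s)`; in particular the left orthogonal of
`thick(𝒮[ℤ_{<0}𝕏])` equals `thick(𝒫[ℤ_{≥0}𝕏])`. -/
theorem minimal_presentation_hom_count_and_orthogonal
    (k : Type) [Field k] [Linear k C]
    [∀ X Y : C, FiniteDimensional k (X ⟶ Y)]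
    {ι : Type} (σ : ℤ → C ⥤ C) (P S : ι → C)
    (horth1 : ∀ (i : ι) (a b : ℤ),
      Module.finrank k ((((σ b).obj (P i))⟦a⟧ : C) ⟶ (((σ b).obj (S i))⟦a⟧ : C)) = 1)
    (horth0 : ∀ (i j : ι) (a b r s : ℤ), ¬(i = j ∧ a = r ∧ b = s) →
      ∀ φ : (((σ b).obj (P i))⟦a⟧ : C) ⟶ (((σ s).obj (S j))⟦r⟧ : C), φ = 0)
    (hpres : ∀ Z : C, Nonempty (MinPres σ P S Z)) :
    (∀ (Z : C) (mp : MinPres σ P S Z) (j : ι) (r s : ℤ),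
      Module.finrank k (Z ⟶ (((σ s).obj (S j))⟦r⟧ : C)) =
        (Finset.univ.filter
          (fun m : Fin mp.N => mp.lab m = j ∧ mp.aF m = r ∧ mp.bF m = s)).card) ∧
    {Z : C | ∀ y : C, thickGen {y' : C | ∃ (j : ι) (s : ℤ), s < 0 ∧ y' = (σ s).obj (S j)} y →
        ∀ φ : Z ⟶ y, φ = 0} =
      {Z : C | thickGen {x : C | ∃ (i : ι) (b : ℤ), 0 ≤ b ∧ x = (σ b).obj (P i)} Z} := by
  have hPS := finrank_hom_shift_eq_ite k horth1 horth0
  refine ⟨fun Z mp j r s => mp.finrank_hom_eq_card k hPS j r s,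
    Set.ext fun Z => ⟨fun hZ => ?_, ?_⟩⟩
  · obtain ⟨mp⟩ := hpres Z
    refine mp.thickGen_of_mem fun m => ⟨mp.lab m, mp.bF m, ?_, rfl⟩
    by_contra hb
    obtain ⟨φ, hφ⟩ := mp.exists_hom_ne_zero k hPS m
    exact hφ (hZ _ (.shift _ (.of ⟨_, _, by omega, rfl⟩)) φ)
  · rintro hZ y hy
    refine hZ.hom_eq_zero hy ?_
    rintro _ ⟨i, b, hb, rfl⟩ _ ⟨j, s, hs, rfl⟩ n φ
    simpa using horth0 i j n b 0 s (by omega) (φ ≫ (shiftFunctorZero C ℤ).inv.app _) =≫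
      (shiftFunctorZero C ℤ).hom.app _
end

section
/- Let $\mathcal{A}$ be a dg category, $F:\mathcal{A}\to\mathcal{A}$ a dg functor, $\mathcal{B},\mathcal{B}'$ dg categories, $(H,\eta)$ an object of the $\mathbb{N}$-left-lax-equivariant category (i.e. $H\in\mathrm{rep}_{dg}(\mathcal{A},\mathcal{B})$ and $\eta:HF\to H$ a closed degree-0 bimodule morphism). Define, for each $p\geq 0$, $\eta^p = \eta\circ\eta F\circ\cdots\circ\eta F^{p-1}:HF^p\to H$. Define $G_0$ by $G_0(Z,Q_{\mathbb{N}}X)=H(Z,X)$, with left action of a morphism $f=\sum_p f_p$ of $\mathcal{A}/_{ll}F^{\mathbb{N}}$ (where $f_p$ corresponds to $g_p:X\to F^pY$) given by $\lambda_f(g)=\sum_p\eta^p\circ\lambda_{f_p}(g)$. Then this defines a dg $\mathcal{A}/_{ll}F^{\mathbb{N}}$-$\mathcal{B}$-bimodule structure on $G_0$; i.e. the action is associative and unital and compatible with the differentials. -/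
open scoped Classical

/-! A lightweight formalization of dg categories over a field `k`:
morphism spaces are `k`-modules equipped with a differential `d` and a
`ℤ`-grading given by submodules of homogeneous components. -/

universe u

structure DGCat (k : Type) [Field k] : Type 1 where
  Obj : Type
  V : Obj → Obj → ModuleCat.{0} k
  comp : ∀ {X Y Z : Obj}, V Y Z → V X Y → V X Z
  one : ∀ X : Obj, V X X
  d : ∀ {X Y : Obj}, V X Y → V X Y
  deg : ∀ (X Y : Obj), ℤ → Submodule k (V X Y)
  comp_add_left : ∀ {X Y Z : Obj} (g g' : V Y Z) (f : V X Y),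
      comp (g + g') f = comp g f + comp g' f
  comp_add_right : ∀ {X Y Z : Obj} (g : V Y Z) (f f' : V X Y),
      comp g (f + f') = comp g f + comp g f'
  comp_smul_left : ∀ {X Y Z : Obj} (c : k) (g : V Y Z) (f : V X Y),
      comp (c • g) f = c • comp g f
  comp_smul_right : ∀ {X Y Z : Obj} (c : k) (g : V Y Z) (f : V X Y),
      comp g (c • f) = c • comp g f
  one_comp : ∀ {X Y : Obj} (f : V X Y), comp (one Y) f = f
  comp_one : ∀ {X Y : Obj} (f : V X Y), comp f (one X) = f
  comp_assoc : ∀ {W X Y Z : Obj} (h : V Y Z) (g : V X Y) (f : V W X),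
      comp (comp h g) f = comp h (comp g f)
  d_add : ∀ {X Y : Obj} (f g : V X Y), d (f + g) = d f + d g
  d_smul : ∀ {X Y : Obj} (c : k) (f : V X Y), d (c • f) = c • d f
  d_sq : ∀ {X Y : Obj} (f : V X Y), d (d f) = 0
  /-- graded Leibniz rule, for `g` homogeneous of degree `m` -/
  leibniz : ∀ {X Y Z : Obj} {m : ℤ} (g : V Y Z) (f : V X Y), g ∈ deg Y Z m →
      d (comp g f) = comp (d g) f + (Int.negOnePow m : ℤ) • comp g (d f)
  comp_deg : ∀ {X Y Z : Obj} {m n : ℤ} (g : V Y Z) (f : V X Y),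
      g ∈ deg Y Z m → f ∈ deg X Y n → comp g f ∈ deg X Z (m + n)
  d_deg : ∀ {X Y : Obj} {n : ℤ} (f : V X Y), f ∈ deg X Y n → d f ∈ deg X Y (n + 1)
  one_deg : ∀ X : Obj, one X ∈ deg X X 0
  d_one : ∀ X : Obj, d (one X) = 0

namespace DGCat

variable {k : Type} [Field k]

theorem d_zero (A : DGCat k) {X Y : A.Obj} : A.d (0 : A.V X Y) = 0 := by
  simpa using A.d_smul (0 : k) (0 : A.V X Y)

end DGCat

/-- A dg functor between dg categories. -/
structure DGFunctor {k : Type} [Field k] (A B : DGCat k) where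
  obj : A.Obj → B.Obj
  map : ∀ {X Y : A.Obj}, A.V X Y → B.V (obj X) (obj Y)
  map_add : ∀ {X Y : A.Obj} (f g : A.V X Y), map (f + g) = map f + map g
  map_smul : ∀ {X Y : A.Obj} (c : k) (f : A.V X Y), map (c • f) = c • map f
  map_comp : ∀ {X Y Z : A.Obj} (g : A.V Y Z) (f : A.V X Y),
      map (A.comp g f) = B.comp (map g) (map f)
  map_one : ∀ X : A.Obj, map (A.one X) = B.one (obj X)
  map_d : ∀ {X Y : A.Obj} (f : A.V X Y), map (A.d f) = B.d (map f)
  map_deg : ∀ {X Y : A.Obj} {n : ℤ} (f : A.V X Y), f ∈ A.deg X Y n →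
      map f ∈ B.deg (obj X) (obj Y) n

namespace DGFunctor

variable {k : Type} [Field k]

/-- The identity dg functor. -/
def idF (A : DGCat k) : DGFunctor A A where
  obj X := X
  map f := f
  map_add _ _ := rfl
  map_smul _ _ := rfl
  map_comp _ _ := rfl
  map_one _ := rfl
  map_d _ := rfl
  map_deg _ h := h

/-- Composition of dg functors. -/
def compF {A B C : DGCat k} (G : DGFunctor B C) (F : DGFunctor A B) : DGFunctor A C where
  obj X := G.obj (F.obj X)
  map f := G.map (F.map f)
  map_add f g := by rw [F.map_add, G.map_add]
  map_smul c f := by rw [F.map_smul, G.map_smul]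
  map_comp g f := by rw [F.map_comp, G.map_comp]
  map_one X := by rw [F.map_one, G.map_one]
  map_d f := by rw [F.map_d, G.map_d]
  map_deg f h := G.map_deg _ (F.map_deg f h)

/-- `p`-th iterate of a dg endofunctor. -/
def pow {A : DGCat k} (F : DGFunctor A A) : ℕ → DGFunctor A A
  | 0 => idF A
  | p + 1 => (pow F p).compF F

theorem pow_obj_add {A : DGCat k} (F : DGFunctor A A) (p q : ℕ) (Y : A.Obj) :
    (F.pow p).obj ((F.pow q).obj Y) = (F.pow (p + q)).obj Y := by
  induction q generalizing Y with
  | zero => rfl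
  | succ q ih => exact ih (F.obj Y)

end DGFunctor

section LaxQuotient

variable {k : Type} [Field k] (A : DGCat k) (F : DGFunctor A A)

/-- Morphism spaces of the left lax quotient `A /_{ll} F^ℕ`:
`⊕_{p ∈ ℕ} A(X, F^p Y)`. -/
abbrev llHom (X Y : A.Obj) : Type := Π₀ p : ℕ, (A.V X ((F.pow p).obj Y))

/-- transport of a morphism along an equality of targets -/
def tr {X : A.Obj} {W W' : A.Obj} (h : W = W') (f : A.V X W) : A.V X W' := h ▸ f

/-- Composition in the left lax quotient: `g ⋄ f = (F^p g) ∘ f` on components. -/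
noncomputable def llComp {X Y Z : A.Obj} (g : llHom A F Y Z) (f : llHom A F X Y) :
    llHom A F X Z :=
  DFinsupp.sum f fun p fp =>
    DFinsupp.sum g fun q gq =>
      DFinsupp.single (p + q)
        (tr A (DGFunctor.pow_obj_add F p q Z) (A.comp ((F.pow p).map gq) fp))

/-- The differential of the left lax quotient, acting componentwise. -/
noncomputable def llD {X Y : A.Obj} (f : llHom A F X Y) : llHom A F X Y :=
  DFinsupp.mapRange (fun _ x => A.d x) (fun _ => A.d_zero) f

/-- Identity morphisms of the left lax quotient. -/
noncomputable def llOne (X : A.Obj) : llHom A F X X :=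
  DFinsupp.single 0 (A.one X)

/-- The canonical dg functor `Qℕ` on morphisms (it is the identity on objects). -/
noncomputable def llQ {X Y : A.Obj} (f : A.V X Y) : llHom A F X Y :=
  DFinsupp.single 0 f

/-- Homogeneity of degree `n` in the left lax quotient. -/
def llIsDeg {X Y : A.Obj} (n : ℤ) (f : llHom A F X Y) : Prop :=
  ∀ p : ℕ, f p ∈ A.deg X ((F.pow p).obj Y) n

/-- The canonical morphism `q X : Qℕ F X ⟶ Qℕ X`, given by `id_{F X}`
in the summand `p = 1`. -/
noncomputable def qMor (X : A.Obj) : llHom A F (F.obj X) X :=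
  DFinsupp.single 1 (A.one (F.obj X))

/-- The iterated morphism `q^p Y : Qℕ F^p Y ⟶ Qℕ Y`. -/
noncomputable def qPow : (p : ℕ) → (Y : A.Obj) → llHom A F ((F.pow p).obj Y) Y
  | 0, Y => llOne A F Y
  | p + 1, Y => llComp A F (qMor A F Y) (qPow p (F.obj Y))

end LaxQuotient

section Bimodule

variable {k : Type} [Field k] {A B : DGCat k}

/-- A dg `A`-`B`-bimodule `H ∈ rep_dg(A, B)`, recording only its underlying
complexes `H(Z, X)`, its left `A`-action and its differential (the right
`B`-module structure plays no role in the statement). -/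
structure DGBimod (A B : DGCat k) where
  M : B.Obj → A.Obj → ModuleCat.{0} k
  /-- left action: a morphism `f : X ⟶ Y` of `A` acts by `m ↦ f · m`. -/
  act : ∀ {Z : B.Obj} {X Y : A.Obj}, A.V X Y → M Z X → M Z Y
  d : ∀ {Z : B.Obj} {X : A.Obj}, M Z X → M Z X
  act_add_left : ∀ {Z X Y} (f g : A.V X Y) (m : M Z X), act (f + g) m = act f m + act g m
  act_add_right : ∀ {Z X Y} (f : A.V X Y) (m m' : M Z X), act f (m + m') = act f m + act f m'
  act_one : ∀ {Z X} (m : M Z X), act (A.one X) m = m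
  act_comp : ∀ {Z X Y W} (g : A.V Y W) (f : A.V X Y) (m : M Z X),
      act (A.comp g f) m = act g (act f m)
  d_add : ∀ {Z X} (m m' : M Z X), d (m + m') = d m + d m'
  d_sq : ∀ {Z X} (m : M Z X), d (d m) = 0
  leibniz : ∀ {Z X Y} {n : ℤ} (f : A.V X Y) (m : M Z X), f ∈ A.deg X Y n →
      d (act f m) = act (A.d f) m + (Int.negOnePow n : ℤ) • act f (d m)

variable (F : DGFunctor A A) (H : DGBimod A B)

/-- A closed degree-0 morphism of bimodules `η : HF ⟶ H`. -/
structure EtaData where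
  app : ∀ {Z : B.Obj} (X : A.Obj), H.M Z (F.obj X) → H.M Z X
  app_add : ∀ {Z} (X) (m m' : H.M Z (F.obj X)), app X (m + m') = app X m + app X m'
  natural : ∀ {Z : B.Obj} {X Y : A.Obj} (f : A.V X Y) (m : H.M Z (F.obj X)),
      app Y (H.act (F.map f) m) = H.act f (app X m)
  commd : ∀ {Z : B.Obj} (X : A.Obj) (m : H.M Z (F.obj X)),
      app X (H.d m) = H.d (app X m)

variable (η : EtaData F H)

/-- `η^p = η ∘ ηF ∘ ⋯ ∘ ηF^{p-1} : HF^p ⟶ H`. -/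
def etaPow : (p : ℕ) → ∀ {Z : B.Obj} (X : A.Obj), H.M Z ((F.pow p).obj X) → H.M Z X
  | 0, _, _, m => m
  | p + 1, _, X, m => η.app X (etaPow p (F.obj X) m)

/-- The left action `λ_f(m) = Σ_p η^p (g_p · m)` of the left lax quotient
`A /_{ll} F^ℕ` on `G₀(Z, Qℕ X) = H(Z, X)`. -/
noncomputable def lamAct {Z : B.Obj} {X Y : A.Obj} (f : llHom A F X Y) (m : H.M Z X) :
    H.M Z Y :=
  DFinsupp.sum f fun p gp => etaPow F H η p Y (H.act gp m)



theorem DGBimod.act_zero {Z : B.Obj} {X Y : A.Obj} (m : H.M Z X) :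
    H.act (0 : A.V X Y) m = 0 := by
  have h := H.act_add_left (0 : A.V X Y) 0 m
  rw [add_zero] at h
  exact (left_eq_add.mp h)

theorem DGBimod.d_zero {Z : B.Obj} {X : A.Obj} :
    H.d (0 : H.M Z X) = 0 := by
  have h := H.d_add (0 : H.M Z X) 0
  rw [add_zero] at h
  exact (left_eq_add.mp h)


theorem etaPow_add' (p : ℕ) {Z : B.Obj} (X : A.Obj) (m m' : H.M Z ((F.pow p).obj X)) :
    etaPow F H η p X (m + m') = etaPow F H η p X m + etaPow F H η p X m' := by
  induction p generalizing X with
  | zero => rfl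
  | succ p ih =>
      show η.app X (etaPow F H η p (F.obj X) (m + m')) = _
      exact (congrArg (η.app X) (ih (F.obj X) m m')).trans (η.app_add X _ _)

/-- `etaPow` bundled as an additive homomorphism. -/
noncomputable def etaPowHom (p : ℕ) {Z : B.Obj} (X : A.Obj) :
    H.M Z ((F.pow p).obj X) →+ H.M Z X :=
  AddMonoidHom.mk' (etaPow F H η p X) (etaPow_add' F H η p X)

theorem etaPow_zero' (p : ℕ) {Z : B.Obj} (X : A.Obj) :
    etaPow F H η p X (0 : H.M Z ((F.pow p).obj X)) = 0 :=
  (etaPowHom F H η p X).map_zero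

/-- naturality of `η^p`. -/
theorem etaPow_natural (p : ℕ) {Z : B.Obj} {Y W : A.Obj} (g : A.V Y W)
    (m : H.M Z ((F.pow p).obj Y)) :
    etaPow F H η p W (H.act ((F.pow p).map g) m) = H.act g (etaPow F H η p Y m) := by
  induction p generalizing Y W with
  | zero => rfl
  | succ p ih =>
      show η.app W (etaPow F H η p (F.obj W) (H.act ((F.pow p).map (F.map g)) m)) = _
      rw [ih (F.map g) m, η.natural]
      rfl

theorem etaPow_commd (p : ℕ) {Z : B.Obj} (X : A.Obj) (m : H.M Z ((F.pow p).obj X)) :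
    etaPow F H η p X (H.d m) = H.d (etaPow F H η p X m) := by
  induction p generalizing X with
  | zero => rfl
  | succ p ih =>
      show η.app X (etaPow F H η p (F.obj X) (H.d m)) = _
      rw [ih (F.obj X) m, η.commd]
      rfl

theorem lamAct_single {Z : B.Obj} {X Y : A.Obj} (p : ℕ)
    (x : A.V X ((F.pow p).obj Y)) (m : H.M Z X) :
    lamAct F H η (DFinsupp.single p x) m = etaPow F H η p Y (H.act x m) := by
  refine DFinsupp.sum_single_index ?_
  rw [H.act_zero, etaPow_zero']

theorem lamAct_add_right {Z : B.Obj} {X Y : A.Obj} (f : llHom A F X Y)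
    (m m' : H.M Z X) :
    lamAct F H η f (m + m') = lamAct F H η f m + lamAct F H η f m' := by
  unfold lamAct DFinsupp.sum
  rw [← Finset.sum_add_distrib]
  refine Finset.sum_congr rfl fun p _ => ?_
  dsimp only
  rw [H.act_add_right, etaPow_add']

/-- `lamAct` in `m` as an additive homomorphism. -/
noncomputable def lamActHom {Z : B.Obj} {X Y : A.Obj} (f : llHom A F X Y) :
    H.M Z X →+ H.M Z Y :=
  AddMonoidHom.mk' (fun m => lamAct F H η f m) (lamAct_add_right F H η f)

/-- The key compatibility of `etaPow` with the lax composition. -/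
theorem etaPow_key (p q : ℕ) {Z : B.Obj} {X Y : A.Obj} (W : A.Obj)
    (gq : A.V Y ((F.pow q).obj W)) (fp : A.V X ((F.pow p).obj Y)) (m : H.M Z X) :
    etaPow F H η (p + q) W
      (H.act (tr A (DGFunctor.pow_obj_add F p q W) (A.comp ((F.pow p).map gq) fp)) m)
    = etaPow F H η q W (H.act gq (etaPow F H η p Y (H.act fp m))) := by
  induction q generalizing W with
  | zero =>
      have h : tr A (DGFunctor.pow_obj_add F p 0 W) (A.comp ((F.pow p).map gq) fp)
          = A.comp ((F.pow p).map gq) fp := by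
        rw [Subsingleton.elim (DGFunctor.pow_obj_add F p 0 W) rfl]
        rfl
      rw [h]
      exact (congrArg (etaPow F H η p W) (H.act_comp ((F.pow p).map gq) fp m)).trans
        (etaPow_natural F H η p gq (H.act fp m))
  | succ q ih =>
      have h : tr A (DGFunctor.pow_obj_add F p (q + 1) W)
            (A.comp ((F.pow p).map gq) fp)
          = tr A (DGFunctor.pow_obj_add F p q (F.obj W))
            (A.comp ((F.pow p).map gq) fp) := by
        rw [Subsingleton.elim (DGFunctor.pow_obj_add F p (q + 1) W)
          (DGFunctor.pow_obj_add F p q (F.obj W))]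
        rfl
      show η.app W (etaPow F H η (p + q) (F.obj W) _) = η.app W _
      rw [h]
      exact congrArg (η.app W) (ih (F.obj W) gq)



theorem lamAct_add_left {Z : B.Obj} {X Y : A.Obj} (f f' : llHom A F X Y) (m : H.M Z X) :
    lamAct F H η (f + f') m = lamAct F H η f m + lamAct F H η f' m := by
  refine DFinsupp.sum_add_index (fun p => ?_) (fun p b b' => ?_)
  · rw [H.act_zero, etaPow_zero']
  · rw [H.act_add_left, etaPow_add']

/-- `lamAct` in the morphism variable as an additive homomorphism. -/
noncomputable def lamActHomF {Z : B.Obj} {X Y : A.Obj} (m : H.M Z X) :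
    llHom A F X Y →+ H.M Z Y :=
  AddMonoidHom.mk' (fun f => lamAct F H η f m) (fun f f' => lamAct_add_left F H η f f' m)

theorem lamAct_dfinsupp_sum {ι : Type} {β : ι → Type} [DecidableEq ι] [∀ i, Zero (β i)]
    [∀ (i) (x : β i), Decidable (x ≠ 0)] {Z : B.Obj} {X Y : A.Obj}
    (t : Π₀ i, β i) (h : ∀ i, β i → llHom A F X Y) (m : H.M Z X) :
    lamAct F H η (t.sum h) m = t.sum fun i b => lamAct F H η (h i b) m :=
  map_dfinsuppSum (lamActHomF F H η m) t h

theorem etaPow_zsmul (p : ℕ) {Z : B.Obj} (X : A.Obj) (z : ℤ)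
    (m : H.M Z ((F.pow p).obj X)) :
    etaPow F H η p X (z • m) = z • etaPow F H η p X m :=
  map_zsmul (etaPowHom F H η p X) z m

/-- The differential of `H` as an additive homomorphism. -/
noncomputable def dHom {Z : B.Obj} {X : A.Obj} : H.M Z X →+ H.M Z X :=
  AddMonoidHom.mk' (fun m => H.d m) (fun m m' => H.d_add m m')

set_option maxHeartbeats 2000000 in
/-- Given `(H, η)` in the `ℕ`-left-lax-equivariant category,
the assignment `G₀(Z, Qℕ X) = H(Z, X)` with action `λ_f(m) = Σ_p η^p(g_p · m)`
defines a dg `A/_{ll}F^ℕ`-`B`-bimodule structure on `G₀`: the action is additive,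
unital, associative, and compatible with the differentials. -/
theorem lax_equivariant_bimodule_structure {Z : B.Obj} :
    (∀ (X Y : A.Obj) (f f' : llHom A F X Y) (m : H.M Z X),
        lamAct F H η (f + f') m = lamAct F H η f m + lamAct F H η f' m) ∧
    (∀ (X : A.Obj) (m : H.M Z X), lamAct F H η (llOne A F X) m = m) ∧
    (∀ (X Y W : A.Obj) (g : llHom A F Y W) (f : llHom A F X Y) (m : H.M Z X),
        lamAct F H η (llComp A F g f) m = lamAct F H η g (lamAct F H η f m)) ∧
    (∀ (X Y : A.Obj) (n : ℤ) (f : llHom A F X Y), llIsDeg A F n f →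
        ∀ m : H.M Z X,
          H.d (lamAct F H η f m) =
            lamAct F H η (llD A F f) m
              + (Int.negOnePow n : ℤ) • lamAct F H η f (H.d m)) := by
  refine ⟨?_, ?_, ?_, ?_⟩
  · intro X Y f f' m
    exact lamAct_add_left F H η f f' m
  · intro X m
    rw [llOne]
    exact (lamAct_single F H η 0 (A.one X) m).trans (H.act_one m)
  · intro X Y W g f m
    have hL : lamAct F H η (llComp A F g f) m
        = DFinsupp.sum f fun p fp => lamAct F H η
            (DFinsupp.sum g fun q gq => DFinsupp.single (p + q)
              (tr A (DGFunctor.pow_obj_add F p q W) (A.comp ((F.pow p).map gq) fp))) m :=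
      lamAct_dfinsupp_sum F H η f
        (fun p fp => DFinsupp.sum g fun q gq => DFinsupp.single (p + q)
          (tr A (DGFunctor.pow_obj_add F p q W) (A.comp ((F.pow p).map gq) fp))) m
    rw [hL]
    have hR : lamAct F H η g (lamAct F H η f m)
        = DFinsupp.sum f fun p fp => lamAct F H η g (etaPow F H η p Y (H.act fp m)) :=
      map_dfinsuppSum (lamActHom F H η g) f
        (fun p fp => etaPow F H η p Y (H.act fp m))
    rw [hR]
    refine congrArg (DFinsupp.sum f) (funext fun p => funext fun fp => ?_)
    have hI : lamAct F H η
          (DFinsupp.sum g fun q gq => DFinsupp.single (p + q)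
            (tr A (DGFunctor.pow_obj_add F p q W) (A.comp ((F.pow p).map gq) fp))) m
        = DFinsupp.sum g fun q gq => lamAct F H η (DFinsupp.single (p + q)
            (tr A (DGFunctor.pow_obj_add F p q W) (A.comp ((F.pow p).map gq) fp))) m :=
      lamAct_dfinsupp_sum F H η g
        (fun q gq => DFinsupp.single (p + q)
          (tr A (DGFunctor.pow_obj_add F p q W) (A.comp ((F.pow p).map gq) fp))) m
    rw [hI]
    show _ = DFinsupp.sum g fun q gq =>
        etaPow F H η q W (H.act gq (etaPow F H η p Y (H.act fp m)))
    refine congrArg (DFinsupp.sum g) (funext fun q => funext fun gq => ?_)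
    rw [lamAct_single]
    exact etaPow_key F H η p q W gq fp m
  · intro X Y n f hf m
    have h1 : H.d (lamAct F H η f m)
        = DFinsupp.sum f fun p fp => H.d (etaPow F H η p Y (H.act fp m)) :=
      map_dfinsuppSum (dHom H) f
        (fun p fp => etaPow F H η p Y (H.act fp m))
    have h2 : lamAct F H η (llD A F f) m
        = DFinsupp.sum f fun p fp => etaPow F H η p Y (H.act (A.d fp) m) :=
      DFinsupp.sum_mapRange_index fun p => by rw [H.act_zero, etaPow_zero']
    have h3 : (Int.negOnePow n : ℤ) • lamAct F H η f (H.d m)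
        = DFinsupp.sum f fun p fp =>
            (Int.negOnePow n : ℤ) • etaPow F H η p Y (H.act fp (H.d m)) :=
      Finset.smul_sum
    have h4 : (DFinsupp.sum f fun p fp => etaPow F H η p Y (H.act (A.d fp) m))
          + (DFinsupp.sum f fun p fp =>
              (Int.negOnePow n : ℤ) • etaPow F H η p Y (H.act fp (H.d m)))
        = DFinsupp.sum f fun p fp =>
            etaPow F H η p Y (H.act (A.d fp) m)
              + (Int.negOnePow n : ℤ) • etaPow F H η p Y (H.act fp (H.d m)) :=
      (Finset.sum_add_distrib).symm
    rw [h1, h2, h3, h4]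
    unfold DFinsupp.sum
    refine Finset.sum_congr rfl fun p _ => ?_
    dsimp only
    rw [← etaPow_commd, H.leibniz (f p) m (hf p), etaPow_add',
        etaPow_zsmul]

end Bimodule
end
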